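/- Let T be a spanning tree of K_{s,t} and let A_T = {v_e : e ∈ E(T)} ⊆ V(K⁺_{s,t}) be the set of added vertices corresponding to edges of T. Then A_T is a good set in K⁺_{s,t} of size s + t − 1; i.e., A_T is independent and every U with A_T ⊊ U ⊆ V(K⁺_{s,t}) satisfies Δ(U) ≥ s + t. -/

import Mathlib

/-!
Write `U = W ⊔ P` with `W` the vertices of `K_{s,t}` in `U` and `P` the added vertices in `U`,
and let `C` index the 3-edges inside `U`, so that `Δ(U) = |W| + |P| - |C|` and `T ∪ C ⊆ P`.
The tree edges in `T ∩ C` have all their endpoints in `W`, and a tree has fewer than `|W|` edges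
inside a nonempty vertex set `W`. Hence, if `C ≠ ∅`,
`Δ(U) ≥ |W| + |T ∪ C| - |C| = |W| + |T| - |T ∩ C| ≥ |T| + 1 = s + t`,
while if `C = ∅` simply `Δ(U) = |U| > |A_T| = |T|`.
-/

/-- A 3-uniform hypergraph on vertex type `V`: a finite set of edges, each of size 3. -/
structure Hypergraph3 (V : Type*) where
  edges : Finset (Finset V)
  card3 : ∀ e ∈ edges, e.card = 3

variable {V : Type*} [DecidableEq V]

/-- The edges of `F` contained in the vertex set `U`. -/
def edgesIn (F : Hypergraph3 V) (U : Finset V) : Finset (Finset V) :=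
  F.edges.filter (fun e => e ⊆ U)

/-- The deficiency `Δ(U) = |U| - e(F[U])`. -/
def defic (F : Hypergraph3 V) (U : Finset V) : ℤ :=
  (U.card : ℤ) - ((edgesIn F U).card : ℤ)

/-- `A` is independent in `F` if no edge of `F` is contained in `A`. -/
def Indep (F : Hypergraph3 V) (A : Finset V) : Prop :=
  ∀ e ∈ F.edges, ¬ e ⊆ A

/-- `A` is good: independent, and every strict superset `U` has `Δ(U) ≥ |A| + 1`. -/
def Good (F : Hypergraph3 V) (A : Finset V) : Prop :=
  Indep F A ∧ ∀ U : Finset V, A ⊂ U → (A.card : ℤ) + 1 ≤ defic F U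

/-- The vertex type of `K⁺_{s,t}`: left part, right part, and one vertex per edge. -/
abbrev KV (s t : ℕ) := Fin s ⊕ Fin t ⊕ Fin s × Fin t

/-- The 3-edge of `K⁺_{s,t}` corresponding to the pair `p`. -/
def KplusEdge (s t : ℕ) (p : Fin s × Fin t) : Finset (KV s t) :=
  {Sum.inl p.1, Sum.inr (Sum.inl p.2), Sum.inr (Sum.inr p)}

/-- `K⁺_{s,t}`: the 3-uniform hypergraph obtained from `K_{s,t}` by adding a distinct new
vertex to each edge. -/
def Kplus (s t : ℕ) : Hypergraph3 (KV s t) where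
  edges := Finset.univ.image (KplusEdge s t)
  card3 := by
    intro e he
    simp only [Finset.mem_image] at he
    obtain ⟨p, -, rfl⟩ := he
    rw [KplusEdge, Finset.card_insert_of_notMem (by simp),
      Finset.card_insert_of_notMem (by simp), Finset.card_singleton]

/-- The bipartite graph on `Fin s ⊕ Fin t` whose edges are the pairs in `T`. -/
def bipGraph (s t : ℕ) (T : Finset (Fin s × Fin t)) : SimpleGraph (Fin s ⊕ Fin t) :=
  SimpleGraph.fromRel (fun a b => ∃ p ∈ T, a = Sum.inl p.1 ∧ b = Sum.inr p.2)

namespace SimpleGraph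

variable {α : Type*} {G : SimpleGraph α}

lemma IsTree.eq_of_adj_of_dist_lt (hG : G.IsTree) {r v u₁ u₂ : α} (h₁ : G.Adj u₁ v)
    (h₂ : G.Adj u₂ v) (hd₁ : G.dist r u₁ < G.dist r v) (hd₂ : G.dist r u₂ < G.dist r v) :
    u₁ = u₂ := by
  classical
  obtain ⟨p, hp, -⟩ := hG.connected.exists_path_of_dist r v
  have parent : ∀ u, G.Adj u v → G.dist r u < G.dist r v → u = p.penultimate := by
    intro u hadj hd
    obtain ⟨q, hq, hql⟩ := hG.connected.exists_path_of_dist r u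
    have hv : v ∉ q.support := fun hv ↦ by
      have := dist_le (q.takeUntil v hv)
      have := q.length_takeUntil_le_length hv
      omega
    exact hG.isAcyclic.eq_penultimate_of_adj_end hp hadj.symm
      (hG.isAcyclic.mem_support_of_ne_mem_support_of_adj_of_isPath hp hq hadj.symm hv)
  exact (parent u₁ h₁ hd₁).trans (parent u₂ h₂ hd₂).symm

/-- Orient each edge away from a root `r ∈ W`: its far endpoint lies in `W \ {r}` and, by
uniqueness of parents, determines the edge. -/
lemma IsTree.card_lt_card_of_subset_edgeSet (hG : G.IsTree) {S : Finset (Sym2 α)}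
    {W : Finset α} (hSG : (S : Set (Sym2 α)) ⊆ G.edgeSet) (hSW : ∀ e ∈ S, ∀ v ∈ e, v ∈ W)
    (hW : W.Nonempty) : S.card < W.card := by
  classical
  obtain ⟨r, hr⟩ := hW
  have hle : S.card ≤ (W.erase r).card := by
    refine Finset.card_le_card_of_forall_subsingleton
      (fun e v ↦ ∃ u, e = s(u, v) ∧ G.dist r u < G.dist r v) ?_ ?_
    · intro e he
      induction e using Sym2.ind with
      | _ x y =>
        have hxy : G.Adj x y := hSG he
        have hx := hSW _ he x (Sym2.mem_mk_left x y)
        have hy := hSW _ he y (Sym2.mem_mk_right x y)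
        rcases (hG.dist_ne_of_adj r hxy).lt_or_gt with h | h
        · exact ⟨y, Finset.mem_erase.2 ⟨by rintro rfl; simp at h, hy⟩, x, rfl, h⟩
        · exact ⟨x, Finset.mem_erase.2 ⟨by rintro rfl; simp at h, hx⟩, y, Sym2.eq_swap, h⟩
    · rintro v - e₁ ⟨he₁, u₁, rfl, hd₁⟩ e₂ ⟨he₂, u₂, rfl, hd₂⟩
      have h₁ : G.Adj u₁ v := hSG he₁
      have h₂ : G.Adj u₂ v := hSG he₂
      rw [hG.eq_of_adj_of_dist_lt h₁ h₂ hd₁ hd₂]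
  rw [Finset.card_erase_of_mem hr] at hle
  have := Finset.card_pos.2 ⟨r, hr⟩
  omega

end SimpleGraph

section Kplus

variable {s t : ℕ}

def bipEdge (p : Fin s × Fin t) : Sym2 (Fin s ⊕ Fin t) := s(Sum.inl p.1, Sum.inr p.2)

lemma bipEdge_injective : Function.Injective (bipEdge (s := s) (t := t)) := by
  intro p q h
  simpa [bipEdge, Prod.ext_iff] using h

lemma bipGraph_edgeSet (T : Finset (Fin s × Fin t)) :
    (bipGraph s t T).edgeSet = bipEdge '' T := by
  ext e
  induction e using Sym2.ind with
  | _ x y =>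
    rcases x with i | j <;> rcases y with i' | j' <;>
      simp [bipGraph, bipEdge, Sym2.eq_swap, and_comm]

lemma card_add_one_of_isTree {T : Finset (Fin s × Fin t)} (hT : (bipGraph s t T).IsTree) :
    T.card + 1 = s + t := by
  classical
  have hE : (bipGraph s t T).edgeFinset = T.image bipEdge := by
    ext e
    simp [bipGraph_edgeSet]
  simpa [hE, Finset.card_image_of_injective _ bipEdge_injective] using hT.card_edgeFinset

lemma card_image_inr_inr (P : Finset (Fin s × Fin t)) :
    (P.image fun p => (Sum.inr (Sum.inr p) : KV s t)).card = P.card :=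
  Finset.card_image_of_injective _ fun p q h ↦ by simpa using h

lemma card_KV_finset (U : Finset (KV s t)) :
    U.card = (U.toLeft.disjSum U.toRight.toLeft).card + U.toRight.toRight.card := by
  rw [Finset.card_disjSum, add_assoc, Finset.card_toLeft_add_card_toRight,
    Finset.card_toLeft_add_card_toRight]

lemma KplusEdge_injective : Function.Injective (KplusEdge s t) := by
  intro p q h
  have hp : (Sum.inr (Sum.inr p) : KV s t) ∈ KplusEdge s t q := by
    rw [← h]; simp [KplusEdge]
  simpa [KplusEdge] using hp

lemma KplusEdge_subset_iff {p : Fin s × Fin t} {U : Finset (KV s t)} :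
    KplusEdge s t p ⊆ U ↔
      Sum.inl p.1 ∈ U ∧ Sum.inr (Sum.inl p.2) ∈ U ∧ Sum.inr (Sum.inr p) ∈ U := by
  simp [KplusEdge, Finset.insert_subset_iff]

lemma card_edgesIn_Kplus (U : Finset (KV s t)) :
    (edgesIn (Kplus s t) U).card = (Finset.univ.filter (KplusEdge s t · ⊆ U)).card := by
  rw [edgesIn, Kplus, Finset.filter_image,
    Finset.card_image_of_injective _ KplusEdge_injective]

lemma indep_Kplus_image_inr_inr (P : Finset (Fin s × Fin t)) :
    Indep (Kplus s t) (P.image fun p => Sum.inr (Sum.inr p)) := by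
  intro e he hsub
  obtain ⟨p, -, rfl⟩ := Finset.mem_image.1 he
  simpa using (KplusEdge_subset_iff.1 hsub).1

lemma add_le_defic_Kplus_of_ssubset {T : Finset (Fin s × Fin t)}
    (hT : (bipGraph s t T).IsTree) {U : Finset (KV s t)}
    (hU : T.image (fun p => Sum.inr (Sum.inr p)) ⊂ U) :
    (s : ℤ) + t ≤ defic (Kplus s t) U := by
  rw [defic, card_edgesIn_Kplus, card_KV_finset U]
  set C := Finset.univ.filter (KplusEdge s t · ⊆ U)
  set W := U.toLeft.disjSum U.toRight.toLeft
  set P := U.toRight.toRight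
  have hmemC {p} : p ∈ C ↔ KplusEdge s t p ⊆ U := by simp [C]
  have hTP : T ⊆ P := fun p hp ↦
    Finset.mem_toRight.2 (Finset.mem_toRight.2 (hU.subset (Finset.mem_image_of_mem _ hp)))
  have hCP : C ⊆ P := fun p hp ↦ by
    simpa [P] using (KplusEdge_subset_iff.1 (hmemC.1 hp)).2.2
  have hTcard := card_add_one_of_isTree hT
  rcases C.eq_empty_or_nonempty with hC | ⟨p₀, hp₀⟩
  · have hUcard := Finset.card_lt_card hU
    rw [card_image_inr_inr] at hUcard
    rw [hC, Finset.card_empty, ← card_KV_finset U]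
    omega
  · have hforest : ((T ∩ C).image bipEdge).card < W.card := by
      refine hT.card_lt_card_of_subset_edgeSet ?_ ?_ ⟨Sum.inl p₀.1, ?_⟩
      · rw [Finset.coe_image, bipGraph_edgeSet]
        exact Set.image_mono (Finset.coe_subset.2 Finset.inter_subset_left)
      · intro e he v hv
        obtain ⟨p, hp, rfl⟩ := Finset.mem_image.1 he
        have := KplusEdge_subset_iff.1 (hmemC.1 (Finset.mem_inter.1 hp).2)
        rcases Sym2.mem_iff.1 hv with rfl | rfl <;> simp [W, this]
      · simpa [W] using (KplusEdge_subset_iff.1 (hmemC.1 hp₀)).1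
    rw [Finset.card_image_of_injective _ bipEdge_injective] at hforest
    have hTC := Finset.card_le_card (Finset.union_subset hTP hCP)
    have := Finset.card_union_add_card_inter T C
    omega

end Kplus

/-- if `T` is a spanning tree of `K_{s,t}`, then the set `A_T` of added vertices
corresponding to the edges of `T` is a good set of size `s + t - 1` in `K⁺_{s,t}`; in
particular every `U ⊋ A_T` satisfies `Δ(U) ≥ s + t`. -/
theorem spanning_tree_good (s t : ℕ) (T : Finset (Fin s × Fin t))
    (hT : (bipGraph s t T).IsTree) :
    Good (Kplus s t) (T.image (fun p => (Sum.inr (Sum.inr p) : KV s t))) ∧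
    (T.image (fun p => (Sum.inr (Sum.inr p) : KV s t))).card = s + t - 1 ∧
    (∀ U : Finset (KV s t),
      T.image (fun p => (Sum.inr (Sum.inr p) : KV s t)) ⊂ U →
      (s : ℤ) + t ≤ defic (Kplus s t) U) := by
  have hcard := card_add_one_of_isTree hT
  rw [← card_image_inr_inr] at hcard
  refine ⟨⟨indep_Kplus_image_inr_inr T, fun U hU ↦ ?_⟩, by omega,
    fun U ↦ add_le_defic_Kplus_of_ssubset hT⟩
  have := add_le_defic_Kplus_of_ssubset hT hU
  omega
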